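/- Define the sequence of positive integers a_n = ⌊exp(√(n·log n))⌋ if n ≥ 2 is a perfect square and a_n = 1 otherwise (with a_1 = 1). Then (i) there exists a constant C > 0 such that ∑_{k=1}^{n} log(a_k + 1) ≤ C·n·√(log n) for all n ≥ 2, and (ii) there exists a constant c > 0 such that (log a_n)² ≥ c·n·log n for every perfect square n ≥ 4. (Here log is the natural logarithm and ⌊·⌋ is the floor function.) -/

import Mathlib

/-!
Only the `⌊√n⌋` perfect squares up to `n` contribute more than `log 2` to the sum, and each
contributes at most `log 2 + √(n log n)`, so the sum is `O(n log 2 + √n · √(n log n)) =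
O(n √(log n))`. At a square `n ≥ 4` the exponent `s = √(n log n)` is at least `2`, and then
`log ⌊eˢ⌋ ≥ s - log 2 ≥ s / 2`, whence `(log a_n)² ≥ n log n / 4`.
-/

open Real Finset

theorem Nat.card_filter_isSquare_Icc_le_sqrt (n : ℕ) :
    #{k ∈ Icc 1 n | IsSquare k} ≤ Nat.sqrt n := by
  calc #{k ∈ Icc 1 n | IsSquare k} ≤ #((Icc 1 (Nat.sqrt n)).image fun m => m * m) := by
        refine card_le_card fun k hk => ?_
        simp only [mem_filter, mem_Icc] at hk
        obtain ⟨⟨hk1, hkn⟩, m, rfl⟩ := hk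
        refine mem_image.2 ⟨m, mem_Icc.2 ⟨?_, Nat.le_sqrt.2 hkn⟩, rfl⟩
        exact Nat.pos_of_ne_zero (by rintro rfl; omega)
    _ ≤ #(Icc 1 (Nat.sqrt n)) := Finset.card_image_le
    _ = Nat.sqrt n := by simp

theorem sum_Icc_le_of_le_add_ite_isSquare {f : ℕ → ℝ} {A B : ℝ} (n : ℕ) (hB : 0 ≤ B)
    (hf : ∀ k ∈ Icc 1 n, f k ≤ A + if IsSquare k then B else 0) :
    ∑ k ∈ Icc 1 n, f k ≤ n * A + √n * B := by
  calc ∑ k ∈ Icc 1 n, f k ≤ ∑ k ∈ Icc 1 n, (A + if IsSquare k then B else 0) := sum_le_sum hf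
    _ = n * A + #{k ∈ Icc 1 n | IsSquare k} * B := by
        simp [sum_add_distrib, sum_ite]
    _ ≤ n * A + √n * B := by
        gcongr
        exact (Nat.cast_le.2 (Nat.card_filter_isSquare_Icc_le_sqrt n)).trans nat_sqrt_le_real_sqrt

theorem log_natFloor_exp_add_one_le {s : ℝ} (hs : 0 ≤ s) : log (⌊exp s⌋₊ + 1) ≤ log 2 + s := by
  have hfloor : (⌊exp s⌋₊ : ℝ) ≤ exp s := Nat.floor_le (exp_nonneg s)
  calc log (⌊exp s⌋₊ + 1) ≤ log (2 * exp s) :=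
        log_le_log (by positivity) (by linarith [one_le_exp hs])
    _ = log 2 + s := by rw [log_mul two_ne_zero (exp_ne_zero s), log_exp]

theorem div_two_le_log_natFloor_exp {s : ℝ} (hs : 2 ≤ s) : s / 2 ≤ log ⌊exp s⌋₊ := by
  have hexp : 2 ≤ exp s := by linarith [add_one_le_exp s]
  calc s / 2 ≤ log (exp s / 2) := by
        rw [log_div (exp_ne_zero s) two_ne_zero, log_exp]
        linarith [log_two_lt_d9]
    _ ≤ log ⌊exp s⌋₊ := log_le_log (by positivity) (by linarith [Nat.sub_one_lt_floor (exp s)])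

theorem sqrt_mul_log_le_sqrt_mul_log {x y : ℝ} (hx : 1 ≤ x) (hxy : x ≤ y) :
    √(x * log x) ≤ √(y * log y) :=
  sqrt_le_sqrt <| mul_le_mul hxy (log_le_log (by linarith) hxy) (log_nonneg hx) (by linarith)

theorem log_two_le_sqrt_log {x : ℝ} (hx : 2 ≤ x) : log 2 ≤ √(log x) :=
  calc log 2 ≤ √(log 2) := by
        rw [le_sqrt (log_nonneg one_le_two) (log_nonneg one_le_two)]
        nlinarith [log_two_lt_d9, log_pos one_lt_two]
    _ ≤ √(log x) := sqrt_le_sqrt (log_le_log two_pos hx)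

theorem one_le_log_of_four_le {x : ℝ} (hx : 4 ≤ x) : 1 ≤ log x := by
  rw [le_log_iff_exp_le (by linarith)]
  linarith [exp_one_lt_d9]

noncomputable def squareSpikes (n : ℕ) : ℕ :=
  if 2 ≤ n ∧ IsSquare n then ⌊exp √((n : ℝ) * log n)⌋₊ else 1

theorem log_squareSpikes_add_one_le {k n : ℕ} (hk : k ∈ Icc 1 n) :
    log (squareSpikes k + 1) ≤ log 2 + if IsSquare k then √(n * log n) else 0 := by
  obtain ⟨hk1, hkn⟩ := mem_Icc.1 hk
  unfold squareSpikes
  split_ifs with hspike hsq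
  · grw [log_natFloor_exp_add_one_le (sqrt_nonneg _),
      sqrt_mul_log_le_sqrt_mul_log (mod_cast hk1 : (1 : ℝ) ≤ k) (mod_cast hkn : (k : ℝ) ≤ n)]
  · exact absurd hspike.2 hsq
  · norm_num
    positivity
  · norm_num

theorem sum_log_squareSpikes_add_one_le {n : ℕ} (hn : 2 ≤ n) :
    ∑ k ∈ Icc 1 n, log (squareSpikes k + 1) ≤ 2 * n * √(log n) := by
  have hn' : (2 : ℝ) ≤ n := by exact_mod_cast hn
  have hsqrt : √n * √(n * log n) = n * √(log n) := by
    rw [sqrt_mul (Nat.cast_nonneg n), ← mul_assoc, mul_self_sqrt (Nat.cast_nonneg n)]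
  calc ∑ k ∈ Icc 1 n, log (squareSpikes k + 1) ≤ n * log 2 + √n * √(n * log n) :=
        sum_Icc_le_of_le_add_ite_isSquare n (sqrt_nonneg _)
          fun k hk => log_squareSpikes_add_one_le hk
    _ ≤ 2 * n * √(log n) := by
        rw [hsqrt]
        nlinarith [log_two_le_sqrt_log hn']

theorem mul_log_le_sq_log_squareSpikes {n : ℕ} (hn : 4 ≤ n) (hsq : IsSquare n) :
    1 / 4 * n * log n ≤ log (squareSpikes n) ^ 2 := by
  have hn' : (4 : ℝ) ≤ n := by exact_mod_cast hn
  have hlog := one_le_log_of_four_le hn'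
  have hs : 2 ≤ √(n * log n) := by
    rw [le_sqrt zero_le_two (by positivity)]
    nlinarith
  rw [squareSpikes, if_pos ⟨by omega, hsq⟩]
  calc 1 / 4 * n * log n = (√(n * log n) / 2) ^ 2 := by
        rw [div_pow, sq_sqrt (by positivity)]
        ring
    _ ≤ _ := by gcongr; exact div_two_le_log_natFloor_exp hs

/-- The final example of Section 3.3: for `a_n = ⌊exp(√(n·log n))⌋` when `n ≥ 2` is a perfect
square and `a_n = 1` otherwise, (i) there is `C > 0` with
`∑_{k=1}^n log(a_k + 1) ≤ C·n·√(log n)` for all `n ≥ 2`, and (ii) there is `c > 0` with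
`(log a_n)² ≥ c·n·log n` for every perfect square `n ≥ 4`. -/
theorem example_inverse_David_not_finite_distortion (a : ℕ → ℕ)
    (hadef : ∀ n : ℕ, a n =
      if 2 ≤ n ∧ IsSquare n then ⌊Real.exp (Real.sqrt ((n : ℝ) * Real.log n))⌋₊ else 1) :
    (∃ C : ℝ, 0 < C ∧ ∀ n : ℕ, 2 ≤ n →
      ∑ k ∈ Finset.Icc 1 n, Real.log ((a k : ℝ) + 1) ≤
        C * (n : ℝ) * Real.sqrt (Real.log n)) ∧
    (∃ c : ℝ, 0 < c ∧ ∀ n : ℕ, 4 ≤ n → IsSquare n →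
      c * (n : ℝ) * Real.log n ≤ (Real.log (a n)) ^ 2) := by
  obtain rfl : a = squareSpikes := funext hadef
  exact ⟨⟨2, two_pos, fun _ => sum_log_squareSpikes_add_one_le⟩,
    ⟨1 / 4, by norm_num, fun _ => mul_log_le_sq_log_squareSpikes⟩⟩
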